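/- arXiv:quant-ph/0506048 — 2 statements merged into one kernel-verified Lean document; each statement's English description precedes it below -/
import Mathlib

section
/- Let ω(θ) = arcsin(sin θ/√2) and define ψ̃_L(n, t) = (1/(2π)) ∫_{−π}^{π} e^{−i(t ω(θ) + n θ)} dθ and ψ_L(n, t) = ψ̃_L(n, t) + (1/(2π)) ∫_{−π}^{π} (cos θ/√(1 + cos²θ)) e^{−i(t ω(θ) + n θ)} dθ. Then for t ≥ 1, ψ_L(n, t) = ((t − n)/t) ψ̃_L(n, t). -/
/-!
Since `ω' θ = cos θ / √(1 + cos² θ)`, `t` times the weight of the second integral of `ψL`, plus `n`,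
is the derivative of the phase `Φ θ = t ω θ + n θ`, and `Φ' e^{-iΦ} = (i e^{-iΦ})'`. As
`Φ (±π) = ±nπ` with `n ∈ ℤ`, `e^{-iΦ}` takes the same value at both ends, so
`t · ∫ ω' e^{-iΦ} + n · ∫ e^{-iΦ} = 0`; dividing by `t` gives the identity.
-/
open Real

noncomputable def ω (θ : ℝ) : ℝ := Real.arcsin (Real.sin θ / Real.sqrt 2)

noncomputable def ψLtilde (n : ℤ) (t : ℕ) : ℂ :=
  (1 / (2 * π)) * ∫ θ in (-π)..π,
    Complex.exp (-Complex.I * ((t : ℂ) * (ω θ : ℂ) + (n : ℂ) * (θ : ℂ)))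

noncomputable def ψL (n : ℤ) (t : ℕ) : ℂ :=
  ψLtilde n t + (1 / (2 * π)) * ∫ θ in (-π)..π,
    ((Real.cos θ / Real.sqrt (1 + Real.cos θ ^ 2) : ℝ) : ℂ) *
      Complex.exp (-Complex.I * ((t : ℂ) * (ω θ : ℂ) + (n : ℂ) * (θ : ℂ)))

theorem integral_deriv_mul_cexp_neg_I_mul {φ φ' : ℝ → ℝ} {a b : ℝ}
    (hφ : ∀ x ∈ Set.uIcc a b, HasDerivAt φ (φ' x) x)
    (hφ' : IntervalIntegrable φ' MeasureTheory.volume a b) :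
    ∫ x in a..b, (φ' x : ℂ) * Complex.exp (-Complex.I * φ x) =
      Complex.I * Complex.exp (-Complex.I * φ b) - Complex.I * Complex.exp (-Complex.I * φ a) := by
  have hderiv : ∀ x ∈ Set.uIcc a b, HasDerivAt (fun x => Complex.I * Complex.exp (-Complex.I * φ x))
      ((φ' x : ℂ) * Complex.exp (-Complex.I * φ x)) x := fun x hx => by
    refine ((((hφ x hx).ofReal_comp.const_mul (-Complex.I)).cexp).const_mul Complex.I).congr_deriv ?_
    linear_combination (-(φ' x : ℂ) * Complex.exp (-Complex.I * φ x)) * Complex.I_sq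
  refine intervalIntegral.integral_eq_sub_of_hasDerivAt hderiv ?_
  have hcont : ContinuousOn (fun x => Complex.exp (-Complex.I * φ x)) (Set.uIcc a b) :=
    fun x hx => (ContinuousAt.cexp (((hφ x hx).continuousAt.ofReal).const_mul _)).continuousWithinAt
  exact IntervalIntegrable.mul_continuousOn ⟨hφ'.1.ofReal, hφ'.2.ofReal⟩ hcont

theorem hasDerivAt_ω (θ : ℝ) :
    HasDerivAt ω (Real.cos θ / Real.sqrt (1 + Real.cos θ ^ 2)) θ := by
  have hsqrt2 : 0 < Real.sqrt 2 := by positivity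
  have hlt : |Real.sin θ / Real.sqrt 2| < 1 := by
    rw [abs_div, abs_of_pos hsqrt2, div_lt_one hsqrt2]
    exact (Real.abs_sin_le_one θ).trans_lt (by simpa using Real.sqrt_lt_sqrt zero_le_one one_lt_two)
  have harcsin := Real.hasDerivAt_arcsin (abs_lt.1 hlt).1.ne' (abs_lt.1 hlt).2.ne
  refine (harcsin.comp θ ((Real.hasDerivAt_sin θ).div_const _)).congr_deriv ?_
  have hrad : 1 - (Real.sin θ / Real.sqrt 2) ^ 2 = (1 + Real.cos θ ^ 2) / 2 := by
    rw [div_pow, Real.sq_sqrt zero_le_two]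
    linear_combination (-1 / 2 : ℝ) * Real.sin_sq_add_cos_sq θ
  rw [hrad, Real.sqrt_div' _ zero_le_two]
  have : 0 < Real.sqrt (1 + Real.cos θ ^ 2) := Real.sqrt_pos.2 (by positivity)
  field_simp

theorem continuous_cos_div_sqrt_one_add_cos_sq :
    Continuous fun θ => Real.cos θ / Real.sqrt (1 + Real.cos θ ^ 2) :=
  Real.continuous_cos.div (by fun_prop) fun θ => (Real.sqrt_pos.2 (by positivity)).ne'

theorem continuous_ω : Continuous ω :=
  continuous_iff_continuousAt.2 fun θ => (hasDerivAt_ω θ).continuousAt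

theorem integral_phase_deriv_mul_cexp_eq_zero (t : ℝ) (n : ℤ) :
    ∫ θ in (-π)..π, ((t * (Real.cos θ / Real.sqrt (1 + Real.cos θ ^ 2)) + n : ℝ) : ℂ) *
      Complex.exp (-Complex.I * (t * ω θ + n * θ : ℝ)) = 0 := by
  have hphase (θ : ℝ) : HasDerivAt (fun θ => t * ω θ + n * θ)
      (t * (Real.cos θ / Real.sqrt (1 + Real.cos θ ^ 2)) + n) θ := by
    have := ((hasDerivAt_ω θ).const_mul t).add ((hasDerivAt_id θ).const_mul (n : ℝ))
    rwa [mul_one] at this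
  have hperiodic : Complex.exp (-Complex.I * ↑(t * ω π + n * π)) =
      Complex.exp (-Complex.I * ↑(t * ω (-π) + n * -π)) := by
    simp only [ω, Real.sin_pi, Real.sin_neg, neg_zero, zero_div, Real.arcsin_zero, mul_zero,
      zero_add]
    exact Complex.exp_eq_exp_iff_exists_int.2 ⟨-n, by push_cast; ring⟩
  rw [integral_deriv_mul_cexp_neg_I_mul (fun θ _ => hphase θ)
    ((continuous_cos_div_sqrt_one_add_cos_sq.const_mul t |>.add continuous_const).intervalIntegrable
      _ _), hperiodic, sub_self]

theorem stmt_11_general (n : ℤ) (t : ℕ) (ht : 1 ≤ t) :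
    ψL n t = (((t : ℂ) - (n : ℂ)) / (t : ℂ)) * ψLtilde n t := by
  set g : ℝ → ℝ := fun θ => Real.cos θ / Real.sqrt (1 + Real.cos θ ^ 2)
  set F : ℝ → ℂ := fun θ => Complex.exp (-Complex.I * ((t : ℂ) * (ω θ : ℂ) + (n : ℂ) * (θ : ℂ)))
  set A := ∫ θ in (-π)..π, (g θ : ℂ) * F θ
  set B := ∫ θ in (-π)..π, F θ
  have hg : Continuous g := continuous_cos_div_sqrt_one_add_cos_sq
  have hF : Continuous F := by have := continuous_ω; fun_prop
  have hlin : (t : ℂ) * A + n * B = 0 := by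
    have hparts := integral_phase_deriv_mul_cexp_eq_zero t n
    simp only [Complex.ofReal_add, Complex.ofReal_mul, Complex.ofReal_natCast,
      Complex.ofReal_intCast] at hparts
    rw [← hparts, ← intervalIntegral.integral_const_mul, ← intervalIntegral.integral_const_mul,
      ← intervalIntegral.integral_add (Continuous.intervalIntegrable (by fun_prop) _ _)
        (Continuous.intervalIntegrable (by fun_prop) _ _)]
    congr 1 with θ
    ring
  have hψL : ψL n t = 1 / (2 * π) * B + 1 / (2 * π) * A := rfl
  have hψLtilde : ψLtilde n t = 1 / (2 * π) * B := rfl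
  have ht0 : (t : ℂ) ≠ 0 := by exact_mod_cast (by omega : t ≠ 0)
  rw [hψL, hψLtilde]
  field_simp
  linear_combination hlin

theorem stmt_11 (n : ℤ) (t : ℕ) (ht : 1 ≤ t) (hpar : n ≡ (t : ℤ) [ZMOD 2]) :
    ψL n t = (((t : ℂ) - (n : ℂ)) / (t : ℂ)) * ψLtilde n t :=
  stmt_11_general n t ht
end

section
/- For real a with |a| < 1 and every nonnegative integer m, ∫_0^{π/2} cos(2mθ)/(1 − a² sin²θ) dθ = ((−1)^m π / (2√(1 − a²))) · ((1 − √(1 − a²))/a)^{2m} (with the convention that the right side equals π/2 when m = 0 and a = 0). -/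
/-!
Write `k = a²`, `c = √(1 - k)` and `J b = ∫₀^{π/2} cos (b θ) / (1 - k sin² θ) dθ`. Because
`k cos 2θ = 2 (1 - k sin² θ) - (2 - k)`, the identity `cos (b + 2)θ + cos (b - 2)θ = 2 cos bθ cos 2θ`
cancels the denominator in one term and gives
`k (J (b + 2) + J (b - 2)) = 4 ∫₀^{π/2} cos bθ dθ - 2 (2 - k) J b`.
For `b = 2(m + 1)` the cosine integral vanishes, so `J (2m)` satisfies a three-term recurrence whose
characteristic roots are `(c - 1)/(c + 1)` and its inverse; at `b = 0` the same identity shows that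
`J 2 = J 0 · (c - 1)/(c + 1)`, with `J 0 = π / (2c)` from the antiderivative `arctan (c tan θ) / c`.
Hence `J (2m) = π / (2c) · ((c - 1)/(c + 1))^m`, and `(c - 1)/(c + 1) = -((1 - c)/a)²`.
-/

open Real intervalIntegral

lemma cos_sq_add_mul_sin_sq_pos {c : ℝ} (hc : 0 < c) (θ : ℝ) : 0 < cos θ ^ 2 + c * sin θ ^ 2 := by
  rcases le_total c 1 with h | h <;>
    nlinarith [sin_sq_add_cos_sq θ, mul_nonneg (sub_nonneg.2 h) (sq_nonneg (cos θ)),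
      mul_nonneg (sub_nonneg.2 h) (sq_nonneg (sin θ))]

lemma one_sub_mul_sin_sq_pos {k : ℝ} (hk : k < 1) (θ : ℝ) : 0 < 1 - k * sin θ ^ 2 := by
  linear_combination cos_sq_add_mul_sin_sq_pos (sub_pos.2 hk) θ + sin_sq_add_cos_sq θ

lemma HasDerivAt.arctan_div {f g : ℝ → ℝ} {f' g' x : ℝ} (hf : HasDerivAt f f' x)
    (hg : HasDerivAt g g' x) (hx : g x ≠ 0) :
    HasDerivAt (fun y => Real.arctan (f y / g y)) ((f' * g x - f x * g') / (f x ^ 2 + g x ^ 2)) x := by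
  refine (hf.div hg hx).arctan.congr_deriv ?_
  have : f x ^ 2 + g x ^ 2 ≠ 0 := by positivity
  simp only [Pi.div_apply]
  field_simp
  ring

/-- A continuous branch of `arctan (c * tan θ)` on all of `ℝ`: by the subtraction formula for
`arctan`, `arctan (c tan θ) - θ = arctan ((c - 1) tan θ / (1 + c tan² θ))`. -/
noncomputable def arctanMulTan (c θ : ℝ) : ℝ :=
  θ + arctan ((c - 1) * sin θ * cos θ / (cos θ ^ 2 + c * sin θ ^ 2))

lemma hasDerivAt_arctanMulTan {c : ℝ} (hc : 0 < c) (θ : ℝ) :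
    HasDerivAt (arctanMulTan c) (c / (cos θ ^ 2 + c ^ 2 * sin θ ^ 2)) θ := by
  have hpyth := sin_sq_add_cos_sq θ
  have hV := cos_sq_add_mul_sin_sq_pos hc θ
  have hU : HasDerivAt (fun θ => (c - 1) * sin θ * cos θ)
      ((c - 1) * cos θ * cos θ + (c - 1) * sin θ * -sin θ) θ :=
    ((hasDerivAt_sin θ).const_mul (c - 1)).mul (hasDerivAt_cos θ)
  have hV' : HasDerivAt (fun θ => cos θ ^ 2 + c * sin θ ^ 2)
      (2 * cos θ * -sin θ + c * (2 * sin θ * cos θ)) θ := by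
    refine (((hasDerivAt_cos θ).fun_pow 2).fun_add
      (((hasDerivAt_sin θ).fun_pow 2).const_mul c)).congr_deriv ?_
    ring
  refine ((hasDerivAt_id' θ).fun_add (hU.arctan_div hV' hV.ne')).congr_deriv ?_
  have hX := cos_sq_add_mul_sin_sq_pos (pow_pos hc 2) θ
  have hnorm : ((c - 1) * sin θ * cos θ) ^ 2 + (cos θ ^ 2 + c * sin θ ^ 2) ^ 2
      = cos θ ^ 2 + c ^ 2 * sin θ ^ 2 := by
    linear_combination (cos θ ^ 2 + c ^ 2 * sin θ ^ 2) * hpyth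
  have hnum : ((c - 1) * cos θ * cos θ + (c - 1) * sin θ * -sin θ) * (cos θ ^ 2 + c * sin θ ^ 2)
      - (c - 1) * sin θ * cos θ * (2 * cos θ * -sin θ + c * (2 * sin θ * cos θ))
      = c - (cos θ ^ 2 + c ^ 2 * sin θ ^ 2) := by
    linear_combination ((c - 1) * (cos θ ^ 2 - c * sin θ ^ 2 + 1) + 1) * hpyth
  rw [hnorm, hnum]
  field_simp
  ring

lemma integral_inv_cos_sq_add_mul_sin_sq {c : ℝ} (hc : 0 < c) :
    ∫ θ in (0 : ℝ)..π / 2, (cos θ ^ 2 + c ^ 2 * sin θ ^ 2)⁻¹ = π / (2 * c) := by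
  have hX := cos_sq_add_mul_sin_sq_pos (pow_pos hc 2)
  have hderiv : ∀ θ, HasDerivAt (fun θ => arctanMulTan c θ / c)
      (cos θ ^ 2 + c ^ 2 * sin θ ^ 2)⁻¹ θ := fun θ =>
    ((hasDerivAt_arctanMulTan hc θ).div_const c).congr_deriv (by field_simp)
  have hcont : Continuous fun θ => (cos θ ^ 2 + c ^ 2 * sin θ ^ 2)⁻¹ :=
    (by fun_prop : Continuous fun θ => cos θ ^ 2 + c ^ 2 * sin θ ^ 2).inv₀ fun θ => (hX θ).ne'
  rw [integral_eq_sub_of_hasDerivAt (fun θ _ => hderiv θ) (hcont.intervalIntegrable _ _)]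
  simp only [arctanMulTan, sin_pi_div_two, mul_one, cos_pi_div_two, mul_zero, ne_eq,
    OfNat.ofNat_ne_zero, not_false_eq_true, zero_pow, one_pow, zero_add, zero_div, arctan_zero,
    add_zero, sin_zero, cos_zero, div_one, sub_zero]
  ring

lemma integral_cos_two_nat_mul_eq_zero {n : ℕ} (hn : n ≠ 0) :
    ∫ θ in (0 : ℝ)..π / 2, cos (2 * n * θ) = 0 := by
  have h2n : (2 * n : ℝ) ≠ 0 := by positivity
  rw [integral_comp_mul_left (fun x => cos x) h2n, integral_cos]
  simp [show 2 * (n : ℝ) * (π / 2) = n * π by ring, sin_nat_mul_pi]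

noncomputable def cosDivIntegral (k b : ℝ) : ℝ :=
  ∫ θ in (0 : ℝ)..π / 2, cos (b * θ) / (1 - k * sin θ ^ 2)

lemma cosDivIntegral_neg (k b : ℝ) : cosDivIntegral k (-b) = cosDivIntegral k b := by
  simp [cosDivIntegral]

lemma cosDivIntegral_zero {k : ℝ} (hk : k < 1) :
    cosDivIntegral k 0 = π / (2 * √(1 - k)) := by
  have hc : 0 < √(1 - k) := sqrt_pos.mpr (by linarith)
  rw [← integral_inv_cos_sq_add_mul_sin_sq hc, cosDivIntegral]
  refine integral_congr fun θ _ => ?_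
  rw [sq_sqrt (by linarith), zero_mul, cos_zero, one_div]
  congr 1
  linear_combination -sin_sq_add_cos_sq θ

lemma intervalIntegrable_cos_mul_div {k : ℝ} (hk : k < 1) (b : ℝ) :
    IntervalIntegrable (fun θ => cos (b * θ) / (1 - k * sin θ ^ 2)) MeasureTheory.volume 0 (π / 2) :=
  ((by fun_prop : Continuous fun θ => cos (b * θ)).div (by fun_prop)
    fun θ => (one_sub_mul_sin_sq_pos hk θ).ne').intervalIntegrable _ _

lemma cosDivIntegral_add_two_add_sub_two {k : ℝ} (hk : k < 1) (b : ℝ) :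
    k * (cosDivIntegral k (b + 2) + cosDivIntegral k (b - 2))
      = 4 * (∫ θ in (0 : ℝ)..π / 2, cos (b * θ)) - 2 * (2 - k) * cosDivIntegral k b := by
  have hint := intervalIntegrable_cos_mul_div hk
  have hcos : Continuous fun θ => cos (b * θ) := by fun_prop
  simp only [cosDivIntegral]
  rw [← integral_add (hint _) (hint _), ← integral_const_mul, ← integral_const_mul,
    ← integral_const_mul, ← integral_sub ((hcos.intervalIntegrable _ _).const_mul _)
      ((hint _).const_mul _)]
  refine integral_congr fun θ _ => ?_
  have hD := (one_sub_mul_sin_sq_pos hk θ).ne'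
  simp only [add_mul, sub_mul, cos_add, cos_sub, cos_two_mul]
  field_simp
  linear_combination 4 * k * cos (b * θ) * sin_sq_add_cos_sq θ

lemma eq_mul_pow_of_recurrence {R : Type*} [CommRing R] {u : ℕ → R} {s t : R}
    (h1 : u 1 = s * u 0) (hrec : ∀ n, u (n + 2) = t * u (n + 1) - u n)
    (hs : s ^ 2 = t * s - 1) (n : ℕ) : u n = u 0 * s ^ n := by
  suffices ∀ n, u n = u 0 * s ^ n ∧ u (n + 1) = u 0 * s ^ (n + 1) from (this n).1
  intro n
  induction n with
  | zero => exact ⟨by simp, by rw [h1]; ring⟩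
  | succ n ih =>
    refine ⟨ih.2, ?_⟩
    rw [hrec, ih.1, ih.2]
    linear_combination -(u 0 * s ^ n) * hs

lemma cosDivIntegral_two {k : ℝ} (hk : k < 1) :
    k * cosDivIntegral k 2 = π - (2 - k) * cosDivIntegral k 0 := by
  have h := cosDivIntegral_add_two_add_sub_two hk 0
  simp only [zero_add, zero_sub, cosDivIntegral_neg, zero_mul, cos_zero, integral_const,
    smul_eq_mul, mul_one, sub_zero] at h
  linear_combination h / 2

lemma cosDivIntegral_two_nat_mul_add_two {k : ℝ} (hk : k < 1) (n : ℕ) :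
    k * (cosDivIntegral k (2 * (n + 2)) + cosDivIntegral k (2 * n))
      = -2 * (2 - k) * cosDivIntegral k (2 * (n + 1)) := by
  have h := cosDivIntegral_add_two_add_sub_two hk (2 * (n + 1))
  have h0 := integral_cos_two_nat_mul_eq_zero (n := n + 1) n.succ_ne_zero
  push_cast at h0
  rw [h0, show 2 * ((n : ℝ) + 1) + 2 = 2 * (n + 2) by ring,
    show 2 * ((n : ℝ) + 1) - 2 = 2 * n by ring] at h
  linear_combination h

lemma cosDivIntegral_two_nat_mul {k : ℝ} (hk : k < 1) (n : ℕ) :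
    cosDivIntegral k (2 * n)
      = π / (2 * √(1 - k)) * ((√(1 - k) - 1) / (√(1 - k) + 1)) ^ n := by
  rcases eq_or_ne k 0 with rfl | hk0
  · rcases eq_or_ne n 0 with rfl | hn
    · simp [cosDivIntegral]
    · simpa [cosDivIntegral, hn] using integral_cos_two_nat_mul_eq_zero hn
  set c := √(1 - k)
  have hc : 0 < c := sqrt_pos.mpr (by linarith)
  have hck : k = (1 - c) * (1 + c) := by linear_combination sq_sqrt (by linarith : 0 ≤ 1 - k)
  have hJ0 : cosDivIntegral k 0 = π / (2 * c) := cosDivIntegral_zero hk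
  rw [← hJ0, show (0 : ℝ) = 2 * (0 : ℕ) by simp]
  refine eq_mul_pow_of_recurrence (u := fun n : ℕ => cosDivIntegral k (2 * n))
    (t := -2 * (2 - k) / k) ?_ (fun n => ?_) ?_ n
  · apply mul_left_cancel₀ hk0
    simp only [Nat.cast_one, mul_one, Nat.cast_zero, mul_zero]
    rw [cosDivIntegral_two hk, hJ0]
    field_simp
    rw [hck]
    ring
  · have h := cosDivIntegral_two_nat_mul_add_two hk n
    push_cast
    field_simp
    linear_combination h
  · field_simp
    rw [hck]
    ring

lemma div_sq_eq_one_sub_sqrt_div_one_add_sqrt {a : ℝ} (ha : a ^ 2 ≤ 1) :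
    ((1 - √(1 - a ^ 2)) / a) ^ 2 = (1 - √(1 - a ^ 2)) / (1 + √(1 - a ^ 2)) := by
  rcases eq_or_ne a 0 with rfl | ha0
  · simp -- both sides vanish, the left one through `x / 0 = 0`
  set c := √(1 - a ^ 2)
  have hac : a ^ 2 = (1 - c) * (1 + c) := by linear_combination sq_sqrt (sub_nonneg.2 ha)
  have hc1 : 1 - c ≠ 0 := fun h => ha0 (pow_eq_zero_iff two_ne_zero |>.1 (by rw [hac, h, zero_mul]))
  rw [div_pow, hac, sq, mul_div_mul_left _ _ hc1]

theorem stmt_17 (a : ℝ) (ha : |a| < 1) (m : ℕ) :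
    ∫ θ in (0 : ℝ)..(π / 2), Real.cos (2 * m * θ) / (1 - a ^ 2 * Real.sin θ ^ 2)
      = ((-1 : ℝ) ^ m * π / (2 * Real.sqrt (1 - a ^ 2))) *
        ((1 - Real.sqrt (1 - a ^ 2)) / a) ^ (2 * m) := by
  have ha2 : a ^ 2 < 1 := (sq_lt_one_iff_abs_lt_one a).2 ha
  rw [← cosDivIntegral, cosDivIntegral_two_nat_mul ha2, pow_mul,
    div_sq_eq_one_sub_sqrt_div_one_add_sqrt ha2.le]
  set c := √(1 - a ^ 2)
  rw [show (c - 1) / (c + 1) = -1 * ((1 - c) / (1 + c)) by ring, mul_pow]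
  ring
end
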